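/- arXiv:1703.06922 — 2 statements merged into one kernel-verified Lean document; each statement's English description precedes it below -/
import Mathlib

section
/- Let P be a substochastic matrix indexed by a finite set C (i.e., all entries nonnegative and every row sum at most 1), which is symmetric with nonnegative entries, and let λ be its largest eigenvalue. Then for every m ≥ 1, the maximum over x ∈ C of the sum over y of the (x,y) entry of P^m is at least λ^m and at most |C|^{1/2} · λ^m. -/
/-!
Since `P` is symmetric, `⟪w, P w⟫ ≤ λ ‖w‖²`; since `P` is entrywise nonnegative,
`|t| ‖v‖² = ⟪|v|, |P v|⟫ ≤ ⟪|v|, P |v|⟫` for an eigenpair `(t, v)`, so every eigenvalue has modulus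
at most `λ`. Hence `‖P^m 1‖₂ ≤ λ^m ‖1‖₂ = √|C| λ^m`, which bounds every row sum of `P^m`.
Conversely, evaluating `P^m v = λ^m v` at a coordinate where `|v|` is maximal shows that the row
sum of `P^m` there is at least `λ^m`.
-/

open Finset Matrix

lemma le_sqrt_dotProduct_self {n : Type*} [Fintype n] (u : n → ℝ) (i : n) :
    u i ≤ √(u ⬝ᵥ u) :=
  Real.le_sqrt_of_sq_le <| (sq (u i)).trans_le <|
    single_le_sum (f := fun j => u j * u j) (fun j _ => mul_self_nonneg (u j)) (mem_univ i)

namespace Matrix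

variable {R : Type*} {n : Type*} [Fintype n]

lemma pow_mulVec_eq_smul [CommSemiring R] [DecidableEq n] {A : Matrix n n R} {v : n → R} {t : R}
    (h : A *ᵥ v = t • v) (k : ℕ) : (A ^ k) *ᵥ v = t ^ k • v := by
  induction k with
  | zero => simp
  | succ k ih => rw [pow_succ', ← mulVec_mulVec, ih, mulVec_smul, h, smul_smul, pow_succ]

section Nonneg

variable [Ring R] [LinearOrder R] [IsStrictOrderedRing R] {A : Matrix n n R}

lemma abs_mulVec_le_mulVec_abs (hA : ∀ i j, 0 ≤ A i j) (v : n → R) : |A *ᵥ v| ≤ A *ᵥ |v| := by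
  intro i
  calc |(A *ᵥ v) i| ≤ ∑ j, |A i j * v j| := abs_sum_le_sum_abs _ _
    _ = (A *ᵥ |v|) i := by simp [mulVec, dotProduct, abs_mul, abs_of_nonneg (hA i _)]

lemma abs_le_sup'_sum_of_mulVec_eq_smul [Nonempty n] (hA : ∀ i j, 0 ≤ A i j) {v : n → R}
    (hv : v ≠ 0) {t : R} (ht : A *ᵥ v = t • v) :
    |t| ≤ univ.sup' univ_nonempty (fun i => ∑ j, A i j) := by
  obtain ⟨i, hi⟩ := Finite.exists_max fun j => |v j|
  have hvi : 0 < |v i| := by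
    obtain ⟨j, hj⟩ := Function.ne_iff.mp hv
    exact (abs_pos.mpr hj).trans_le (hi j)
  refine le_of_mul_le_mul_right ?_ hvi
  calc |t| * |v i| = |(A *ᵥ v) i| := by rw [ht, Pi.smul_apply, smul_eq_mul, abs_mul]
    _ ≤ (A *ᵥ |v|) i := abs_mulVec_le_mulVec_abs hA v i
    _ ≤ (∑ j, A i j) * |v i| := by
      simp only [mulVec, dotProduct, sum_mul, Pi.abs_apply]
      exact sum_le_sum fun j _ => mul_le_mul_of_nonneg_left (hi j) (hA i j)
    _ ≤ _ := by gcongr; exact le_sup' (fun i => ∑ j, A i j) (mem_univ i)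

end Nonneg

namespace IsHermitian

variable [DecidableEq n] {A : Matrix n n ℝ} (hA : A.IsHermitian)

lemma exists_mulVec_eq_smul_eigenvalues (i : n) :
    ∃ v : n → ℝ, v ≠ 0 ∧ A *ᵥ v = hA.eigenvalues i • v :=
  ⟨_, fun h => hA.eigenvectorBasis.orthonormal.ne_zero i (by ext j; exact congrFun h j),
    hA.mulVec_eigenvectorBasis i⟩

lemma sum_eigenvectorBasis_dotProduct_mul (u w : n → ℝ) :
    ∑ i, (⇑(hA.eigenvectorBasis i) ⬝ᵥ u) * (⇑(hA.eigenvectorBasis i) ⬝ᵥ w) = u ⬝ᵥ w := by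
  simpa [EuclideanSpace.inner_eq_star_dotProduct, dotProduct_comm] using
    hA.eigenvectorBasis.sum_inner_mul_inner (WithLp.toLp 2 u) (WithLp.toLp 2 w)

lemma eigenvectorBasis_dotProduct_mulVec (i : n) (w : n → ℝ) :
    ⇑(hA.eigenvectorBasis i) ⬝ᵥ (A *ᵥ w) = hA.eigenvalues i * (⇑(hA.eigenvectorBasis i) ⬝ᵥ w) := by
  rw [dotProduct_mulVec, ← mulVec_transpose, (isHermitian_iff_isSymm.mp hA).eq,
    hA.mulVec_eigenvectorBasis, smul_dotProduct, smul_eq_mul]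

lemma dotProduct_mulVec_le {c : ℝ} (hc : ∀ i, hA.eigenvalues i ≤ c) (w : n → ℝ) :
    w ⬝ᵥ (A *ᵥ w) ≤ c * (w ⬝ᵥ w) := by
  rw [← hA.sum_eigenvectorBasis_dotProduct_mul, ← hA.sum_eigenvectorBasis_dotProduct_mul, mul_sum]
  refine sum_le_sum fun i _ => ?_
  rw [eigenvectorBasis_dotProduct_mulVec, mul_left_comm]
  exact mul_le_mul_of_nonneg_right (hc i) (mul_self_nonneg _)

lemma mulVec_dotProduct_mulVec_le {c : ℝ} (hc : ∀ i, |hA.eigenvalues i| ≤ c) (w : n → ℝ) :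
    (A *ᵥ w) ⬝ᵥ (A *ᵥ w) ≤ c ^ 2 * (w ⬝ᵥ w) := by
  rw [← hA.sum_eigenvectorBasis_dotProduct_mul, ← hA.sum_eigenvectorBasis_dotProduct_mul, mul_sum]
  refine sum_le_sum fun i _ => ?_
  rw [eigenvectorBasis_dotProduct_mulVec, mul_mul_mul_comm, ← sq, ← sq_abs]
  exact mul_le_mul_of_nonneg_right (pow_le_pow_left₀ (abs_nonneg _) (hc i) 2) (mul_self_nonneg _)

lemma pow_mulVec_dotProduct_pow_mulVec_le {c : ℝ} (hc : ∀ i, |hA.eigenvalues i| ≤ c) (k : ℕ)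
    (w : n → ℝ) : (A ^ k *ᵥ w) ⬝ᵥ (A ^ k *ᵥ w) ≤ (c ^ 2) ^ k * (w ⬝ᵥ w) := by
  induction k with
  | zero => simp
  | succ k ih =>
    rw [pow_succ', ← mulVec_mulVec, pow_succ', mul_assoc]
    exact (hA.mulVec_dotProduct_mulVec_le hc _).trans (by gcongr)

lemma sup'_sum_pow_apply_le [Nonempty n] {c : ℝ} (hc : ∀ i, |hA.eigenvalues i| ≤ c) (k : ℕ) :
    univ.sup' univ_nonempty (fun i => ∑ j, (A ^ k) i j) ≤ √(Fintype.card n) * c ^ k := by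
  have hc0 : 0 ≤ c := (abs_nonneg _).trans (hc (Classical.arbitrary n))
  have hnorm : (A ^ k *ᵥ 1) ⬝ᵥ (A ^ k *ᵥ 1) ≤ (c ^ k) ^ 2 * Fintype.card n := by
    simpa [← pow_mul, mul_comm k 2] using hA.pow_mulVec_dotProduct_pow_mulVec_le hc k 1
  refine sup'_le _ _ fun i _ => ?_
  calc ∑ j, (A ^ k) i j = (A ^ k *ᵥ 1) i := by simp [mulVec, dotProduct]
    _ ≤ √((A ^ k *ᵥ 1) ⬝ᵥ (A ^ k *ᵥ 1)) := le_sqrt_dotProduct_self _ i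
    _ ≤ √((c ^ k) ^ 2 * Fintype.card n) := Real.sqrt_le_sqrt hnorm
    _ = √(Fintype.card n) * c ^ k := by
      rw [mul_comm, Real.sqrt_mul (Nat.cast_nonneg _), Real.sqrt_sq (pow_nonneg hc0 k)]

lemma abs_le_of_mulVec_eq_smul (hnonneg : ∀ i j, 0 ≤ A i j) {c : ℝ}
    (hc : ∀ i, hA.eigenvalues i ≤ c) {v : n → ℝ} (hv : v ≠ 0) {t : ℝ} (ht : A *ᵥ v = t • v) :
    |t| ≤ c := by
  have hpos : 0 < |v| ⬝ᵥ |v| :=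
    (dotProduct_self_star_nonneg |v|).lt_of_ne' (by simpa using hv)
  refine le_of_mul_le_mul_right ?_ hpos
  calc |t| * (|v| ⬝ᵥ |v|) = |v| ⬝ᵥ |A *ᵥ v| := by
        simp [ht, dotProduct, mul_sum, abs_mul, mul_left_comm]
    _ ≤ |v| ⬝ᵥ (A *ᵥ |v|) :=
      dotProduct_le_dotProduct_of_nonneg_left (abs_mulVec_le_mulVec_abs hnonneg v) (abs_nonneg v)
    _ ≤ c * (|v| ⬝ᵥ |v|) := hA.dotProduct_mulVec_le hc |v|

end IsHermitian

end Matrix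

theorem stmt0_general {C : Type*} [Fintype C] [Nonempty C] [DecidableEq C]
    (P : Matrix C C ℝ) (hsymm : P.IsSymm)
    (hnonneg : ∀ x y, 0 ≤ P x y)
    (lam : ℝ)
    (hlam : IsGreatest {t : ℝ | ∃ v : C → ℝ, v ≠ 0 ∧ P.mulVec v = t • v} lam)
    (m : ℕ) :
    lam ^ m ≤ Finset.univ.sup' Finset.univ_nonempty (fun x => ∑ y, (P ^ m) x y) ∧
    Finset.univ.sup' Finset.univ_nonempty (fun x => ∑ y, (P ^ m) x y) ≤
      Real.sqrt (Fintype.card C) * lam ^ m := by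
  have hP : P.IsHermitian := isHermitian_iff_isSymm.mpr hsymm
  have hle : ∀ i, hP.eigenvalues i ≤ lam := fun i =>
    hlam.2 (hP.exists_mulVec_eq_smul_eigenvalues i)
  have habs : ∀ i, |hP.eigenvalues i| ≤ lam := fun i => by
    obtain ⟨v, hv, hPv⟩ := hP.exists_mulVec_eq_smul_eigenvalues i
    exact hP.abs_le_of_mulVec_eq_smul hnonneg hle hv hPv
  obtain ⟨v, hv, hPv⟩ := hlam.1
  refine ⟨?_, hP.sup'_sum_pow_apply_le habs m⟩
  exact (le_abs_self _).trans
    (abs_le_sup'_sum_of_mulVec_eq_smul (pow_apply_nonneg hnonneg m) hv (pow_mulVec_eq_smul hPv m))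

/-- For a symmetric substochastic matrix `P` with nonnegative entries on a
nonempty finite index set `C`, with largest eigenvalue `lam`, for every `m ≥ 1` the maximum
row sum of `P ^ m` is between `lam ^ m` and `√|C| · lam ^ m`. -/
theorem stmt0 {C : Type*} [Fintype C] [Nonempty C] [DecidableEq C]
    (P : Matrix C C ℝ) (hsymm : P.IsSymm)
    (hnonneg : ∀ x y, 0 ≤ P x y) (hrow : ∀ x, ∑ y, P x y ≤ 1)
    (lam : ℝ)
    (hlam : IsGreatest {t : ℝ | ∃ v : C → ℝ, v ≠ 0 ∧ P.mulVec v = t • v} lam)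
    (m : ℕ) (hm : 1 ≤ m) :
    lam ^ m ≤ Finset.univ.sup' Finset.univ_nonempty (fun x => ∑ y, (P ^ m) x y) ∧
    Finset.univ.sup' Finset.univ_nonempty (fun x => ∑ y, (P ^ m) x y) ≤
      Real.sqrt (Fintype.card C) * lam ^ m :=
  stmt0_general P hsymm hnonneg lam hlam m
end

section
/- Let (S_t) be a Markov chain on a countable state space, let G be a subset of states (the 'good' states), and suppose that for every state x not in G, the probability starting from x of surviving (i.e., remaining in the allowed set A) for the next k steps is at most c < 1. Fix integers j and m = jk. Then the probability that the chain stays in A for m = jk steps while at the start of each of j disjoint length-k blocks it is outside G is at most c^j. In particular, if the chain survives n steps and spends at most half of the time in G, where blocks are formed greedily at non-good times, the survival probability is at most c^{⌊n/(2k)⌋ - 1}. -/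
open scoped Classical

/-- Probability weight of a finite trajectory `ω` (positions at times `1, …, m`)
for the Markov chain with transition kernel `p` started at `x`. -/
noncomputable def pathProb {V : Type*} (p : V → V → ℝ) (x : V) {m : ℕ} (ω : Fin m → V) : ℝ :=
  ∏ i : Fin m, p (if h : (i : ℕ) = 0 then x
    else ω ⟨(i : ℕ) - 1, lt_of_le_of_lt (Nat.sub_le _ _) i.isLt⟩) (ω i)

/-- The position of the chain at time `t`: `x` at time `0`, and `ω (t-1)` for `1 ≤ t ≤ m`. -/
def traj {V : Type*} (x : V) {m : ℕ} (ω : Fin m → V) (t : ℕ) : V :=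
  if h : 1 ≤ t ∧ t ≤ m then ω ⟨t - 1, by omega⟩ else x

/-- Probability that the first `m` steps of the chain started at `x` form a trajectory
satisfying the event `E`. -/
noncomputable def walkP {V : Type*} [Countable V] (p : V → V → ℝ) (x : V) (m : ℕ)
    (E : (Fin m → V) → Prop) : ℝ :=
  ∑' ω : Fin m → V, if E ω then pathProb p x ω else 0

noncomputable def eP {V : Type*} (P : V → V → ENNReal) (x : V) {m : ℕ} (ω : Fin m → V) : ENNReal :=
  ∏ i : Fin m, P (if h : (i : ℕ) = 0 then x
    else ω ⟨(i : ℕ) - 1, lt_of_le_of_lt (Nat.sub_le _ _) i.isLt⟩) (ω i)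

noncomputable def eW {V : Type*} (P : V → V → ENNReal) (x : V) (m : ℕ)
    (E : (Fin m → V) → Prop) : ENNReal :=
  ∑' ω : Fin m → V, if E ω then eP P x ω else 0

lemma traj_zero {V : Type*} (x : V) {m : ℕ} (ω : Fin m → V) : traj x ω 0 = x :=
  dif_neg (by omega)

lemma traj_pos {V : Type*} (x : V) {m : ℕ} (ω : Fin m → V) {t : ℕ} (h1 : 1 ≤ t) (h2 : t ≤ m) :
    traj x ω t = ω ⟨t - 1, by omega⟩ := dif_pos ⟨h1, h2⟩

lemma eP_eq_traj {V : Type*} (P : V → V → ENNReal) (x : V) {m : ℕ} (ω : Fin m → V) :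
    eP P x ω = ∏ i : Fin m, P (traj x ω i) (traj x ω ((i : ℕ) + 1)) := by
  apply Finset.prod_congr rfl
  intro i _
  congr 1
  · by_cases h0 : (i : ℕ) = 0
    · rw [dif_pos h0, h0, traj_zero]
    · rw [dif_neg h0, traj_pos x ω (by omega) i.isLt.le]
  · rw [traj_pos x ω (by omega) (by omega)]
    exact congrArg ω (Fin.ext rfl)

def glue {V : Type*} {a b m : ℕ} (h : a + b = m) (ω₁ : Fin a → V) (ω₂ : Fin b → V) :
    Fin m → V :=
  fun i => if hi : (i : ℕ) < a then ω₁ ⟨i, hi⟩ else ω₂ ⟨(i : ℕ) - a, by omega⟩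

def fsplit {V : Type*} (a b m : ℕ) (h : a + b = m) : (Fin m → V) ≃ (Fin a → V) × (Fin b → V) where
  toFun ω := (fun i => ω ⟨i, by omega⟩, fun i => ω ⟨a + i, by omega⟩)
  invFun q := glue h q.1 q.2
  left_inv ω := by
    funext i
    simp only [glue]
    split_ifs with hi
    · exact congrArg ω (Fin.ext rfl)
    · exact congrArg ω (Fin.ext (by simp; omega))
  right_inv q := by
    refine Prod.ext ?_ ?_ <;> funext i <;> simp only [glue]
    · rw [dif_pos i.isLt]
    · rw [dif_neg (by omega)]
      exact congrArg q.2 (Fin.ext (by simp))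

lemma traj_glue_left {V : Type*} {a b m : ℕ} (h : a + b = m) (x : V)
    (ω₁ : Fin a → V) (ω₂ : Fin b → V) {t : ℕ} (ht : t ≤ a) :
    traj x (glue h ω₁ ω₂) t = traj x ω₁ t := by
  by_cases h1 : 1 ≤ t
  · rw [traj_pos x _ h1 (by omega), traj_pos x ω₁ h1 ht]
    simp only [glue]
    rw [dif_pos (show t - 1 < a by omega)]
  · have : t = 0 := by omega
    subst this; rw [traj_zero, traj_zero]

lemma traj_glue_right {V : Type*} {a b m : ℕ} (h : a + b = m) (x : V)
    (ω₁ : Fin a → V) (ω₂ : Fin b → V) {t : ℕ} (ht : t ≤ b) :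
    traj x (glue h ω₁ ω₂) (a + t) = traj (traj x ω₁ a) ω₂ t := by
  by_cases h1 : 1 ≤ t
  · rw [traj_pos x _ (by omega) (by omega), traj_pos _ ω₂ h1 ht]
    simp only [glue]
    rw [dif_neg (by simp; omega)]
    exact congrArg ω₂ (Fin.ext (by simp; omega))
  · have : t = 0 := by omega
    subst this
    rw [Nat.add_zero, traj_zero]
    by_cases ha : 1 ≤ a
    · rw [traj_pos x _ ha (by omega), traj_pos x ω₁ ha le_rfl]
      simp only [glue]
      rw [dif_pos (by simp; omega)]
    · have : a = 0 := by omega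
      subst this; rw [traj_zero, traj_zero]

lemma traj_restrict {V : Type*} {a m : ℕ} (ham : a ≤ m) (x : V) (ω : Fin m → V)
    {t : ℕ} (ht : t ≤ a) :
    traj x (fun i : Fin a => ω ⟨i, by omega⟩) t = traj x ω t := by
  by_cases h1 : 1 ≤ t
  · rw [traj_pos x _ h1 ht, traj_pos x ω h1 (by omega)]
  · have : t = 0 := by omega
    subst this; rw [traj_zero, traj_zero]

lemma eP_glue {V : Type*} (P : V → V → ENNReal) (x : V) {a b m : ℕ} (h : a + b = m)
    (ω₁ : Fin a → V) (ω₂ : Fin b → V) :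
    eP P x (glue h ω₁ ω₂) = eP P x ω₁ * eP P (traj x ω₁ a) ω₂ := by
  subst h
  rw [eP_eq_traj, eP_eq_traj, eP_eq_traj, Fin.prod_univ_add]
  congr 1
  · apply Finset.prod_congr rfl
    intro i _
    rw [Fin.coe_castAdd, traj_glue_left rfl x ω₁ ω₂ (le_of_lt i.isLt),
      traj_glue_left rfl x ω₁ ω₂ (by omega)]
  · apply Finset.prod_congr rfl
    intro i _
    rw [Fin.coe_natAdd, traj_glue_right rfl x ω₁ ω₂ (le_of_lt i.isLt),
      show a + (i : ℕ) + 1 = a + ((i : ℕ) + 1) by omega,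
      traj_glue_right rfl x ω₁ ω₂ (by omega)]

lemma fsplit_symm_apply {V : Type*} {a b m : ℕ} (h : a + b = m) (ω₁ : Fin a → V)
    (ω₂ : Fin b → V) : (fsplit a b m h).symm (ω₁, ω₂) = glue h ω₁ ω₂ := rfl

lemma glue_restrict {V : Type*} {a b m : ℕ} (h : a + b = m) (ω₁ : Fin a → V)
    (ω₂ : Fin b → V) : (fun i : Fin a => glue h ω₁ ω₂ ⟨i, by omega⟩) = ω₁ :=
  congrArg Prod.fst ((fsplit a b m h).right_inv (ω₁, ω₂))

lemma eP_one {V : Type*} (P : V → V → ENNReal) (x : V) (ω : Fin 1 → V) :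
    eP P x ω = P x (ω 0) := by
  rw [eP, Fin.prod_univ_one, dif_pos (show ((0 : Fin 1) : ℕ) = 0 from rfl)]

lemma eP_total {V : Type*} [Countable V] {P : V → V → ENNReal}
    (hP1 : ∀ x, ∑' y, P x y = 1) :
    ∀ (b : ℕ) (x : V), ∑' ω : Fin b → V, eP P x ω = 1 := by
  intro b
  induction b with
  | zero =>
    intro x
    rw [tsum_eq_single (default : Fin 0 → V) (fun b hb => absurd (Subsingleton.elim b _) hb)]
    simp [eP]
  | succ b ih =>
    intro x
    have h : 1 + b = b + 1 := by omega
    rw [← Equiv.tsum_eq (fsplit 1 b (b+1) h).symm, ENNReal.tsum_prod']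
    have key : ∀ ω₁ : Fin 1 → V, ∑' ω₂ : Fin b → V,
        eP P x ((fsplit 1 b (b+1) h).symm (ω₁, ω₂)) = eP P x ω₁ := by
      intro ω₁
      calc ∑' ω₂ : Fin b → V, eP P x ((fsplit 1 b (b+1) h).symm (ω₁, ω₂))
          = ∑' ω₂ : Fin b → V, eP P x ω₁ * eP P (traj x ω₁ 1) ω₂ := by
            refine tsum_congr fun ω₂ => ?_
            rw [fsplit_symm_apply, eP_glue]
        _ = eP P x ω₁ * 1 := by rw [ENNReal.tsum_mul_left, ih]
        _ = eP P x ω₁ := mul_one _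
    rw [tsum_congr key]
    calc ∑' ω₁ : Fin 1 → V, eP P x ω₁
        = ∑' ω₁ : Fin 1 → V, P x (ω₁ 0) := tsum_congr fun ω₁ => eP_one P x ω₁
      _ = ∑' v : V, P x v := by
          rw [← Equiv.tsum_eq (Equiv.funUnique (Fin 1) V).symm]
          exact tsum_congr fun v => rfl
      _ = 1 := hP1 x

lemma eW_true {V : Type*} [Countable V] {P : V → V → ENNReal}
    (hP1 : ∀ x, ∑' y, P x y = 1) (x : V) (m : ℕ) :
    eW P x m (fun _ => True) = 1 := by
  rw [eW]
  exact (tsum_congr fun ω => if_pos trivial).trans (eP_total hP1 m x)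

lemma eW_mono {V : Type*} [Countable V] (P : V → V → ENNReal) (x : V) (m : ℕ)
    {E F : (Fin m → V) → Prop} (h : ∀ ω, E ω → F ω) :
    eW P x m E ≤ eW P x m F := by
  refine ENNReal.tsum_le_tsum (fun ω => ?_)
  by_cases hE : E ω
  · rw [if_pos hE, if_pos (h ω hE)]
  · rw [if_neg hE]; exact zero_le'

lemma eW_le_one {V : Type*} [Countable V] {P : V → V → ENNReal}
    (hP1 : ∀ x, ∑' y, P x y = 1) (x : V) (m : ℕ) (E : (Fin m → V) → Prop) :
    eW P x m E ≤ 1 :=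
  (eW_mono P x m (fun _ _ => trivial)).trans (eW_true hP1 x m).le

lemma eW_zero {V : Type*} [Countable V] (P : V → V → ENNReal) (x : V) (m : ℕ)
    {E : (Fin m → V) → Prop} (h : ∀ ω, ¬ E ω) : eW P x m E = 0 := by
  rw [eW, tsum_congr fun ω => if_neg (h ω), tsum_zero]

lemma eW_split_le {V : Type*} [Countable V] (P : V → V → ENNReal) {a b m : ℕ}
    (h : a + b = m) (x : V) (F : (Fin m → V) → Prop) (E₁ : (Fin a → V) → Prop)
    (E₂ : V → (Fin b → V) → Prop) (C : ENNReal)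
    (hF : ∀ ω₁ ω₂, F (glue h ω₁ ω₂) → E₁ ω₁ ∧ E₂ (traj x ω₁ a) ω₂)
    (hC : ∀ ω₁, E₁ ω₁ → eW P (traj x ω₁ a) b (E₂ (traj x ω₁ a)) ≤ C) :
    eW P x m F ≤ C * eW P x a E₁ := by
  rw [eW, ← Equiv.tsum_eq (fsplit a b m h).symm, ENNReal.tsum_prod']
  have inner : ∀ ω₁ : Fin a → V,
      (∑' ω₂ : Fin b → V, if F ((fsplit a b m h).symm (ω₁, ω₂))
        then eP P x ((fsplit a b m h).symm (ω₁, ω₂)) else 0)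
      ≤ (if E₁ ω₁ then eP P x ω₁ else 0) * C := by
    intro ω₁
    by_cases hE : E₁ ω₁
    · rw [if_pos hE]
      calc (∑' ω₂ : Fin b → V, if F ((fsplit a b m h).symm (ω₁, ω₂))
            then eP P x ((fsplit a b m h).symm (ω₁, ω₂)) else 0)
          ≤ ∑' ω₂ : Fin b → V, eP P x ω₁ *
              (if E₂ (traj x ω₁ a) ω₂ then eP P (traj x ω₁ a) ω₂ else 0) := by
            refine ENNReal.tsum_le_tsum (fun ω₂ => ?_)
            rw [fsplit_symm_apply]
            by_cases hFω : F (glue h ω₁ ω₂)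
            · rw [if_pos hFω, if_pos (hF ω₁ ω₂ hFω).2, eP_glue]
            · rw [if_neg hFω]; exact zero_le'
        _ = eP P x ω₁ * eW P (traj x ω₁ a) b (E₂ (traj x ω₁ a)) := by
            rw [ENNReal.tsum_mul_left]; rfl
        _ ≤ eP P x ω₁ * C := mul_le_mul_right (hC ω₁ hE) _
    · rw [if_neg hE, zero_mul]
      have : ∀ ω₂ : Fin b → V, (if F ((fsplit a b m h).symm (ω₁, ω₂))
          then eP P x ((fsplit a b m h).symm (ω₁, ω₂)) else 0) = 0 := by
        intro ω₂
        rw [fsplit_symm_apply]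
        exact if_neg (fun hFω => hE (hF ω₁ ω₂ hFω).1)
      rw [tsum_congr this, tsum_zero]
  calc (∑' ω₁ : Fin a → V, ∑' ω₂ : Fin b → V, if F ((fsplit a b m h).symm (ω₁, ω₂))
        then eP P x ((fsplit a b m h).symm (ω₁, ω₂)) else 0)
      ≤ ∑' ω₁ : Fin a → V, (if E₁ ω₁ then eP P x ω₁ else 0) * C :=
        ENNReal.tsum_le_tsum inner
    _ = C * eW P x a E₁ := by rw [ENNReal.tsum_mul_right, mul_comm]; rfl

lemma eW_eq_of_glue {V : Type*} [Countable V] {P : V → V → ENNReal}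
    (hP1 : ∀ x, ∑' y, P x y = 1) {a b m : ℕ} (h : a + b = m) (x : V)
    (E : (Fin m → V) → Prop) (E₁ : (Fin a → V) → Prop)
    (hcompat : ∀ (ω₁ : Fin a → V) (ω₂ : Fin b → V), E (glue h ω₁ ω₂) ↔ E₁ ω₁) :
    eW P x m E = eW P x a E₁ := by
  rw [eW, ← Equiv.tsum_eq (fsplit a b m h).symm, ENNReal.tsum_prod']
  have inner : ∀ ω₁ : Fin a → V,
      (∑' ω₂ : Fin b → V, if E ((fsplit a b m h).symm (ω₁, ω₂))
        then eP P x ((fsplit a b m h).symm (ω₁, ω₂)) else 0)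
      = (if E₁ ω₁ then eP P x ω₁ else 0) := by
    intro ω₁
    by_cases hE : E₁ ω₁
    · calc (∑' ω₂ : Fin b → V, if E ((fsplit a b m h).symm (ω₁, ω₂))
            then eP P x ((fsplit a b m h).symm (ω₁, ω₂)) else 0)
          = ∑' ω₂ : Fin b → V, eP P x ω₁ * eP P (traj x ω₁ a) ω₂ := by
            refine tsum_congr fun ω₂ => ?_
            rw [fsplit_symm_apply]
            rw [if_pos ((hcompat ω₁ ω₂).mpr hE), eP_glue]
        _ = eP P x ω₁ * 1 := by rw [ENNReal.tsum_mul_left, eP_total hP1]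
        _ = (if E₁ ω₁ then eP P x ω₁ else 0) := by rw [mul_one, if_pos hE]
    · rw [if_neg hE]
      refine (tsum_congr fun ω₂ => ?_).trans tsum_zero
      rw [fsplit_symm_apply]
      exact if_neg (fun hc => hE ((hcompat ω₁ ω₂).mp hc))
  rw [tsum_congr inner]; rfl

lemma eW_le_sum_exists {V : Type*} [Countable V] (P : V → V → ENNReal) (x : V) (m : ℕ)
    (s : Finset ℕ) (E : (Fin m → V) → Prop) (D : ℕ → (Fin m → V) → Prop)
    (h : ∀ ω, E ω → ∃ t ∈ s, D t ω) :
    eW P x m E ≤ ∑ t ∈ s, eW P x m (D t) := by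
  rw [eW, show (∑ t ∈ s, eW P x m (D t)) = ∑' ω : Fin m → V, ∑ t ∈ s,
    (if D t ω then eP P x ω else 0) from (Summable.tsum_finsetSum (fun i _ => ENNReal.summable)).symm]
  refine ENNReal.tsum_le_tsum (fun ω => ?_)
  by_cases hE : E ω
  · obtain ⟨t, hts, hD⟩ := h ω hE
    rw [if_pos hE]
    calc eP P x ω = (if D t ω then eP P x ω else 0) := (if_pos hD).symm
      _ ≤ _ := Finset.single_le_sum (f := fun t' => if D t' ω then eP P x ω else 0)
        (fun _ _ => zero_le') hts
  · rw [if_neg hE]; exact zero_le'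

lemma eW_sum_disjoint {V : Type*} [Countable V] {P : V → V → ENNReal}
    (hP1 : ∀ x, ∑' y, P x y = 1) (x : V) (m : ℕ)
    (s : Finset ℕ) (Q : ℕ → (Fin m → V) → Prop)
    (hdisj : ∀ t₁ ∈ s, ∀ t₂ ∈ s, t₁ ≠ t₂ → ∀ ω, Q t₁ ω → ¬ Q t₂ ω) :
    ∑ t ∈ s, eW P x m (Q t) ≤ 1 := by
  rw [show (∑ t ∈ s, eW P x m (Q t)) = ∑' ω : Fin m → V, ∑ t ∈ s,
    (if Q t ω then eP P x ω else 0) from (Summable.tsum_finsetSum (fun i _ => ENNReal.summable)).symm]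
  calc (∑' ω : Fin m → V, ∑ t ∈ s, (if Q t ω then eP P x ω else 0))
      ≤ ∑' ω : Fin m → V, eP P x ω := by
        refine ENNReal.tsum_le_tsum (fun ω => ?_)
        by_cases hex : ∃ t ∈ s, Q t ω
        · obtain ⟨t0, ht0, hQ⟩ := hex
          rw [Finset.sum_eq_single_of_mem t0 ht0
            (fun b hb hne => if_neg (hdisj t0 ht0 b hb hne.symm ω hQ))]
          exact (if_pos hQ).le
        · rw [Finset.sum_eq_zero (fun t ht => if_neg (fun hQ => hex ⟨t, ht, hQ⟩))]
          exact zero_le'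
    _ = 1 := eP_total hP1 m x

lemma blocks_exist (k : ℕ) (hk : 1 ≤ k) :
    ∀ (j n : ℕ) (S : Finset ℕ), (∀ s ∈ S, s ≤ n) → k * j < S.card →
    ∃ ts : Fin j → ℕ, (∀ a b : Fin j, a < b → ts a + k ≤ ts b) ∧
      (∀ a, ts a + k ≤ n) ∧ ∀ a, ts a ∈ S := by
  intro j
  induction j with
  | zero =>
    intro n S _ _
    exact ⟨fun a => a.elim0, fun a => a.elim0, fun a => a.elim0, fun a => a.elim0⟩
  | succ j ih =>
    intro n S hSn hcard
    have hkj : k ≤ k * (j + 1) := Nat.le_mul_of_pos_right k (by omega)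
    have hne : S.Nonempty := Finset.card_pos.mp (by omega)
    set t := S.min' hne with ht
    have htmem : t ∈ S := S.min'_mem hne
    have htle : ∀ s ∈ S, t ≤ s := fun s hs => S.min'_le s hs
    have hsub : S.filter (fun s => ¬ (t + k ≤ s)) ⊆ Finset.Ico t (t + k) := by
      intro s hs
      rw [Finset.mem_filter] at hs
      rw [Finset.mem_Ico]
      exact ⟨htle s hs.1, by omega⟩
    have hcard2 : S.card ≤ (S.filter (fun s => t + k ≤ s)).card + k := by
      have h1 := Finset.card_filter_add_card_filter_not
        (s := S) (p := fun s => t + k ≤ s)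
      have h2 := Finset.card_le_card hsub
      rw [Nat.card_Ico] at h2
      omega
    have hcard3 : k * j < (S.filter (fun s => t + k ≤ s)).card := by
      have : k * (j + 1) = k * j + k := by ring
      omega
    have htk : t + k ≤ n := by
      have hsub2 : S ⊆ Finset.Icc t n := fun s hs => Finset.mem_Icc.mpr ⟨htle s hs, hSn s hs⟩
      have h3 := Finset.card_le_card hsub2
      rw [Nat.card_Icc] at h3
      omega
    obtain ⟨ts', h1', h2', h3'⟩ := ih n (S.filter (fun s => t + k ≤ s))
      (fun s hs => hSn s (Finset.filter_subset _ S hs)) hcard3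
    have hS'k : ∀ a, t + k ≤ ts' a := fun a => (Finset.mem_filter.mp (h3' a)).2
    refine ⟨fun a => if h0 : (a : ℕ) = 0 then t else ts' ⟨(a : ℕ) - 1, by omega⟩, ?_, ?_, ?_⟩
    · intro a b hab
      dsimp only
      have hab' : (a : ℕ) < (b : ℕ) := hab
      by_cases ha0 : (a : ℕ) = 0
      · rw [dif_pos ha0, dif_neg (show (b : ℕ) ≠ 0 by omega)]
        exact hS'k _
      · rw [dif_neg ha0, dif_neg (show (b : ℕ) ≠ 0 by omega)]
        exact h1' _ _ (show ((a : ℕ) - 1 : ℕ) < (b : ℕ) - 1 by omega)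
    · intro a
      dsimp only
      by_cases ha0 : (a : ℕ) = 0
      · rw [dif_pos ha0]; exact htk
      · rw [dif_neg ha0]; exact h2' _
    · intro a
      dsimp only
      by_cases ha0 : (a : ℕ) = 0
      · rw [dif_pos ha0]; exact htmem
      · rw [dif_neg ha0]; exact Finset.filter_subset _ S (h3' _)

/-- Prefix event: survival up to `t₀`, in `G` at all earlier feasible times, outside `G`
at time `t₀`. -/
def PreE {V : Type*} (A G : Set V) (k m : ℕ) (x : V) (s t₀ : ℕ) {l : ℕ}
    (ω₁ : Fin l → V) : Prop :=
  (∀ t ≤ s, traj x ω₁ t ∈ A) ∧ (∀ t < t₀, t + k ≤ m → traj x ω₁ t ∈ G) ∧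
    traj x ω₁ t₀ ∉ G

/-- Survival together with `j` disjoint blocks starting outside `G`. -/
def BlockE {V : Type*} (A G : Set V) (k : ℕ) (j : ℕ) (m : ℕ) (x : V)
    (ω : Fin m → V) : Prop :=
  (∀ t ≤ m, traj x ω t ∈ A) ∧
    ∃ ts : Fin j → ℕ, (∀ a b : Fin j, a < b → ts a + k ≤ ts b) ∧
      (∀ a, ts a + k ≤ m) ∧ (∀ a, traj x ω (ts a) ∉ G)

/-- `BlockE` with the additional information of a first feasible bad time `t₀`. -/
def DfullE {V : Type*} (A G : Set V) (k : ℕ) (j : ℕ) (m : ℕ) (x : V) (t₀ : ℕ)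
    (ω : Fin m → V) : Prop :=
  (∀ t ≤ m, traj x ω t ∈ A) ∧ (∀ t < t₀, t + k ≤ m → traj x ω t ∈ G) ∧
    traj x ω t₀ ∉ G ∧
    ∃ ts : Fin j → ℕ, (∀ a b : Fin j, a < b → ts a + k ≤ ts b) ∧
      (∀ a, t₀ + k ≤ ts a) ∧ (∀ a, ts a + k ≤ m) ∧ (∀ a, traj x ω (ts a) ∉ G)

lemma main_bound {V : Type*} [Countable V] {P : V → V → ENNReal}
    (hP1 : ∀ x, ∑' y, P x y = 1) (A G : Set V) (ec : ENNReal) (hec1 : ec ≤ 1)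
    (k : ℕ) (hk : 1 ≤ k)
    (hbad : ∀ x ∉ G, eW P x k (fun ω => ∀ t ≤ k, traj x ω t ∈ A) ≤ ec) :
    ∀ (j m : ℕ) (x : V), eW P x m (BlockE A G k j m x) ≤ ec ^ j := by
  intro j
  induction j with
  | zero =>
    intro m x
    rw [pow_zero]
    exact eW_le_one hP1 x m _
  | succ j ih =>
    intro m x
    by_cases hmk : k ≤ m
    swap
    · rw [eW_zero]
      · exact zero_le'
      · rintro ω ⟨-, ts, -, h2, -⟩
        have := h2 ⟨0, by omega⟩
        omega
    -- Step 1 : decompose according to the first feasible bad time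
    have step1 : eW P x m (BlockE A G k (j+1) m x) ≤
        ∑ t₀ ∈ Finset.range (m - k + 1), eW P x m (DfullE A G k j m x t₀) := by
      refine eW_le_sum_exists P x m _ _ _ (fun ω hE => ?_)
      obtain ⟨hA, ts, hinc, hfit, hout⟩ := hE
      have hex : ∃ t, t + k ≤ m ∧ traj x ω t ∉ G := ⟨ts 0, hfit 0, hout 0⟩
      refine ⟨Nat.find hex, ?_, hA, ?_, (Nat.find_spec hex).2, ?_⟩
      · rw [Finset.mem_range]
        have := (Nat.find_spec hex).1
        omega
      · intro t ht htk
        by_contra hg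
        exact Nat.find_min hex ht ⟨htk, hg⟩
      · refine ⟨fun a => ts a.succ, fun a b hab => hinc a.succ b.succ ?_, fun a => ?_,
          fun a => hfit a.succ, fun a => hout a.succ⟩
        · exact Fin.succ_lt_succ_iff.mpr hab
        · show Nat.find hex + k ≤ ts a.succ
          have h1 : Nat.find hex ≤ ts 0 := Nat.find_min' hex ⟨hfit 0, hout 0⟩
          have h2 : ts 0 + k ≤ ts a.succ := hinc 0 a.succ (Fin.succ_pos a)
          omega
    -- Step 2+3 : bound each summand
    have step23 : ∀ t₀ ∈ Finset.range (m - k + 1),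
        eW P x m (DfullE A G k j m x t₀) ≤
          ec ^ (j + 1) * eW P x t₀ (PreE A G k m x t₀ t₀) := by
      intro t₀ ht₀
      rw [Finset.mem_range] at ht₀
      have htk : t₀ + k ≤ m := by omega
      have h2 : (t₀ + k) + (m - (t₀ + k)) = m := by omega
      have step2 : eW P x m (DfullE A G k j m x t₀) ≤
          ec ^ j * eW P x (t₀ + k) (PreE A G k m x (t₀ + k) t₀) := by
        refine eW_split_le P h2 x _ _ (fun z ω₂ => BlockE A G k j (m - (t₀ + k)) z ω₂)
          (ec ^ j) ?_ (fun ω₁ _ => ih (m - (t₀ + k)) (traj x ω₁ (t₀ + k)))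
        rintro ω₁ ω₂ ⟨hA, hmid, hbadt, ts, hinc, hge, hfit, hout⟩
        refine ⟨⟨fun t ht => ?_, fun t ht htk' => ?_, ?_⟩, fun t ht => ?_, ?_⟩
        · rw [← traj_glue_left h2 x ω₁ ω₂ ht]; exact hA t (by omega)
        · rw [← traj_glue_left h2 x ω₁ ω₂ (by omega)]; exact hmid t ht htk'
        · rw [← traj_glue_left h2 x ω₁ ω₂ (by omega)]; exact hbadt
        · rw [← traj_glue_right h2 x ω₁ ω₂ ht]; exact hA _ (by omega)
        · refine ⟨fun a => ts a - (t₀ + k), fun a b hab => ?_, fun a => ?_, fun a => ?_⟩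
          · show (ts a - (t₀ + k)) + k ≤ ts b - (t₀ + k)
            have h3 := hinc a b hab
            have h4 := hge a
            omega
          · show (ts a - (t₀ + k)) + k ≤ m - (t₀ + k)
            have h3 := hfit a
            have h4 := hge a
            omega
          · show traj (traj x ω₁ (t₀ + k)) ω₂ (ts a - (t₀ + k)) ∉ G
            have hle : ts a - (t₀ + k) ≤ m - (t₀ + k) := by
              have h3 := hfit a; omega
            rw [← traj_glue_right h2 x ω₁ ω₂ hle,
              show (t₀ + k) + (ts a - (t₀ + k)) = ts a by have h4 := hge a; omega]
            exact hout a
      have step3 : eW P x (t₀ + k) (PreE A G k m x (t₀ + k) t₀) ≤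
          ec * eW P x t₀ (PreE A G k m x t₀ t₀) := by
        refine eW_split_le P (rfl : t₀ + k = t₀ + k) x _ _
          (fun y ω₂ => ∀ t ≤ k, traj y ω₂ t ∈ A) ec ?_ ?_
        · rintro ω₁ ω₂ ⟨hA, hmid, hbadt⟩
          refine ⟨⟨fun t ht => ?_, fun t ht htk' => ?_, ?_⟩, fun t ht => ?_⟩
          · rw [← traj_glue_left rfl x ω₁ ω₂ ht]; exact hA t (by omega)
          · rw [← traj_glue_left rfl x ω₁ ω₂ (by omega)]; exact hmid t ht htk'
          · rw [← traj_glue_left rfl x ω₁ ω₂ le_rfl]; exact hbadt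
          · rw [← traj_glue_right rfl x ω₁ ω₂ ht]; exact hA _ (by omega)
        · rintro ω₁ ⟨-, -, hbadt⟩
          exact hbad _ hbadt
      calc eW P x m (DfullE A G k j m x t₀)
          ≤ ec ^ j * eW P x (t₀ + k) (PreE A G k m x (t₀ + k) t₀) := step2
        _ ≤ ec ^ j * (ec * eW P x t₀ (PreE A G k m x t₀ t₀)) :=
            mul_le_mul_right step3 _
        _ = ec ^ (j + 1) * eW P x t₀ (PreE A G k m x t₀ t₀) := by
            rw [← mul_assoc, pow_succ]
    -- Step 4 : the prefix events are disjoint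
    have step4 : ∑ t₀ ∈ Finset.range (m - k + 1), eW P x t₀ (PreE A G k m x t₀ t₀) ≤ 1 := by
      have hlift : ∀ t₀ ∈ Finset.range (m - k + 1),
          eW P x t₀ (PreE A G k m x t₀ t₀) = eW P x m (PreE A G k m x t₀ t₀) := by
        intro t₀ ht₀
        rw [Finset.mem_range] at ht₀
        have h2 : t₀ + (m - t₀) = m := by omega
        refine (eW_eq_of_glue hP1 h2 x _ _ (fun ω₁ ω₂ => ?_)).symm
        constructor
        · rintro ⟨hA, hmid, hbadt⟩
          refine ⟨fun t ht => ?_, fun t ht htk' => ?_, ?_⟩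
          · rw [← traj_glue_left h2 x ω₁ ω₂ ht]; exact hA t ht
          · rw [← traj_glue_left h2 x ω₁ ω₂ (by omega)]; exact hmid t ht htk'
          · rw [← traj_glue_left h2 x ω₁ ω₂ le_rfl]; exact hbadt
        · rintro ⟨hA, hmid, hbadt⟩
          refine ⟨fun t ht => ?_, fun t ht htk' => ?_, ?_⟩
          · rw [traj_glue_left h2 x ω₁ ω₂ ht]; exact hA t ht
          · rw [traj_glue_left h2 x ω₁ ω₂ (by omega)]; exact hmid t ht htk'
          · rw [traj_glue_left h2 x ω₁ ω₂ le_rfl]; exact hbadt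
      rw [Finset.sum_congr rfl hlift]
      refine eW_sum_disjoint hP1 x m _ _ (fun t₁ h₁ t₂ h₂ hne ω hQ1 hQ2 => ?_)
      rw [Finset.mem_range] at h₁ h₂
      rcases Nat.lt_or_ge t₁ t₂ with hlt | hge
      · exact hQ1.2.2 (hQ2.2.1 t₁ hlt (by omega))
      · have hlt : t₂ < t₁ := by omega
        exact hQ2.2.2 (hQ1.2.1 t₂ hlt (by omega))
    calc eW P x m (BlockE A G k (j+1) m x)
        ≤ ∑ t₀ ∈ Finset.range (m - k + 1), eW P x m (DfullE A G k j m x t₀) := step1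
      _ ≤ ∑ t₀ ∈ Finset.range (m - k + 1),
            ec ^ (j + 1) * eW P x t₀ (PreE A G k m x t₀ t₀) :=
          Finset.sum_le_sum step23
      _ = ec ^ (j + 1) * ∑ t₀ ∈ Finset.range (m - k + 1),
            eW P x t₀ (PreE A G k m x t₀ t₀) := by rw [Finset.mul_sum]
      _ ≤ ec ^ (j + 1) * 1 := mul_le_mul_right step4 _
      _ = ec ^ (j + 1) := mul_one _

lemma eP_ne_top {V : Type*} (p : V → V → ℝ) (x : V) {m : ℕ} (ω : Fin m → V) :
    eP (fun a b => ENNReal.ofReal (p a b)) x ω ≠ ⊤ := by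
  rw [eP]
  exact (ENNReal.prod_lt_top (fun i _ => ENNReal.ofReal_lt_top)).ne

lemma walkP_eq_toReal {V : Type*} [Countable V] (p : V → V → ℝ)
    (hp0 : ∀ x y, 0 ≤ p x y) (x : V) (m : ℕ) (E : (Fin m → V) → Prop) :
    walkP p x m E = (eW (fun a b => ENNReal.ofReal (p a b)) x m E).toReal := by
  rw [eW, ENNReal.tsum_toReal_eq (fun ω => ?_), walkP]
  · refine tsum_congr fun ω => ?_
    by_cases hE : E ω
    · rw [if_pos hE, if_pos hE, eP, ENNReal.toReal_prod, pathProb]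
      exact Finset.prod_congr rfl fun i _ => (ENNReal.toReal_ofReal (hp0 _ _)).symm
    · rw [if_neg hE, if_neg hE, ENNReal.toReal_zero]
  · by_cases hE : E ω
    · rw [if_pos hE]; exact eP_ne_top p x ω
    · rw [if_neg hE]; exact ENNReal.zero_ne_top


/-- if from every state outside `G` the probability of staying in `A` for the next
`k` steps is at most `c < 1`, then the probability of surviving `j·k` steps while being outside
`G` at the starts of `j` disjoint length-`k` blocks is at most `c ^ j`; in particular, surviving
`n` steps while spending at most half the time in `G` has probability at most
`c ^ (⌊n/(2k)⌋ - 1)`. -/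
theorem stmt1 {V : Type*} [Countable V] (p : V → V → ℝ)
    (hp0 : ∀ x y, 0 ≤ p x y) (hp1 : ∀ x, ∑' y, p x y = 1)
    (A G : Set V) (hGA : G ⊆ A) (c : ℝ) (hc0 : 0 < c) (hc1 : c < 1)
    (k : ℕ) (hk : 1 ≤ k)
    (hbad : ∀ x ∉ G, walkP p x k (fun ω => ∀ t ≤ k, traj x ω t ∈ A) ≤ c)
    (x0 : V) (hx0 : x0 ∈ A) :
    (∀ j : ℕ,
      walkP p x0 (j * k) (fun ω =>
        (∀ t ≤ j * k, traj x0 ω t ∈ A) ∧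
        ∃ ts : Fin j → ℕ, (∀ a b : Fin j, a < b → ts a + k ≤ ts b) ∧
          (∀ a : Fin j, ts a + k ≤ j * k) ∧
          (∀ a : Fin j, traj x0 ω (ts a) ∉ G)) ≤ c ^ j) ∧
    (∀ n : ℕ,
      walkP p x0 n (fun ω =>
        (∀ t ≤ n, traj x0 ω t ∈ A) ∧
        2 * ((Finset.Icc 0 n).filter (fun t => traj x0 ω t ∈ G)).card ≤ n) ≤
      c ^ (n / (2 * k) - 1)) := by
  set P : V → V → ENNReal := fun a b => ENNReal.ofReal (p a b) with hP
  have hP1 : ∀ x, ∑' y, P x y = 1 := by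
    intro x
    have hs : Summable (p x) := by
      by_contra hns
      have := hp1 x
      rw [tsum_eq_zero_of_not_summable hns] at this
      norm_num at this
    rw [hP]
    rw [← ENNReal.ofReal_tsum_of_nonneg (hp0 x) hs, hp1 x, ENNReal.ofReal_one]
  set ec : ENNReal := ENNReal.ofReal c with hec
  have hec1 : ec ≤ 1 := by
    rw [hec, ← ENNReal.ofReal_one]
    exact ENNReal.ofReal_le_ofReal hc1.le
  have hbadE : ∀ x ∉ G, eW P x k (fun ω => ∀ t ≤ k, traj x ω t ∈ A) ≤ ec := by
    intro x hx
    have h := hbad x hx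
    rw [walkP_eq_toReal p hp0] at h
    refine (ENNReal.le_ofReal_iff_toReal_le ?_ hc0.le).mpr h
    exact ((eW_le_one hP1 x k _).trans_lt ENNReal.one_lt_top).ne
  have hmain := main_bound hP1 A G ec hec1 k hk hbadE
  have hconv : ∀ (j m : ℕ) (E : (Fin m → V) → Prop),
      eW P x0 m E ≤ ec ^ j → walkP p x0 m E ≤ c ^ j := by
    intro j m E hE
    rw [walkP_eq_toReal p hp0]
    refine ENNReal.toReal_le_of_le_ofReal (pow_nonneg hc0.le j) ?_
    rwa [ENNReal.ofReal_pow hc0.le]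
  constructor
  · intro j
    exact hconv j (j * k) _ (hmain j (j * k) x0)
  · intro n
    refine hconv (n / (2 * k) - 1) n _ ?_
    refine le_trans (eW_mono P x0 n (fun ω hE => ?_)) (hmain (n / (2 * k) - 1) n x0)
    obtain ⟨hA, hg⟩ := hE
    refine ⟨hA, ?_⟩
    set S : Finset ℕ := (Finset.Icc 0 n).filter (fun t => traj x0 ω t ∉ G) with hS
    have hsum : ((Finset.Icc 0 n).filter (fun t => traj x0 ω t ∈ G)).card + S.card
        = n + 1 := by
      rw [hS, Finset.card_filter_add_card_filter_not, Nat.card_Icc]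
      omega
    have hq : 2 * (k * (n / (2 * k))) ≤ n := by
      have h1 := Nat.div_mul_le_self n (2 * k)
      calc 2 * (k * (n / (2 * k))) = n / (2 * k) * (2 * k) := by ring
        _ ≤ n := h1
    have hcard : k * (n / (2 * k) - 1) < S.card := by
      rcases Nat.eq_zero_or_pos (n / (2 * k)) with hq0 | hq0
      · rw [hq0]
        simp only [Nat.zero_sub, Nat.mul_zero]
        omega
      · have hmul : k * (n / (2 * k) - 1) + k = k * (n / (2 * k)) := by
          rw [← Nat.mul_succ]
          congr 1
          omega
        omega
    obtain ⟨ts, h1, h2, h3⟩ := blocks_exist k hk (n / (2 * k) - 1) n S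
      (fun s hs => (Finset.mem_Icc.mp (Finset.mem_filter.mp hs).1).2) hcard
    exact ⟨ts, h1, h2, fun a => (Finset.mem_filter.mp (h3 a)).2⟩
end
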